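/- arXiv:2402.12110 — 5 statements merged into one kernel-verified Lean document; each statement's English description precedes it below -/
import Mathlib

section
/- Let G = (V,E) be a graph and let G' be the 3-subdivision of G, obtained by replacing every edge (u,v) of G by a path u - u' - v' - v with two new internal vertices. Then the minimum vertex cover size of G' equals the minimum vertex cover size of G plus |E|. -/
open Finset

/-- `W` is a vertex cover of the simple graph `G`. -/
def IsVertexCover {V : Type*} (G : SimpleGraph V) (W : Finset V) : Prop :=
  ∀ x y, G.Adj x y → x ∈ W ∨ y ∈ W

/-- `W` is a vertex cover of the 3-subdivision `G'` of `G`.  The 3-subdivision replaces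
each edge `{u,v}` of `G` by the path `u - u' - v' - v`; we encode the subdivision vertex
`u'` adjacent to `u` on edge `{u,v}` as `Sum.inr (u, v)`, and the original vertices as
`Sum.inl`.  A vertex cover consists of genuine vertices of `G'` and touches each of the
three edges `(u,u')`, `(u',v')`, `(v',v)` of every subdivided edge. -/
def IsSubdivVertexCover {V : Type*} (G : SimpleGraph V) (W : Finset (V ⊕ V × V)) : Prop :=
  (∀ p : V × V, Sum.inr p ∈ W → G.Adj p.1 p.2) ∧
  ∀ u v, G.Adj u v →
    (Sum.inl u ∈ W ∨ Sum.inr (u, v) ∈ W) ∧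
    (Sum.inr (u, v) ∈ W ∨ Sum.inr (v, u) ∈ W) ∧
    (Sum.inr (v, u) ∈ W ∨ Sum.inl v ∈ W)

/-- Recover the underlying edge from a vertex of the subdivision. -/
def edgeOfAux {V : Type*} : V ⊕ V × V → Sym2 V
  | Sum.inl u => s(u, u)
  | Sum.inr p => s(p.1, p.2)

@[simp] lemma edgeOfAux_inr {V : Type*} (p : V × V) :
    edgeOfAux (Sum.inr p) = s(p.1, p.2) := rfl

lemma sym2_maxmin {V : Type*} [LinearOrder V] (x y : V) : s(max x y, min x y) = s(x, y) := by
  rcases le_total x y with h | h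
  · rw [max_eq_right h, min_eq_left h, Sym2.eq_swap]
  · rw [max_eq_left h, min_eq_right h]

lemma adj_maxmin {V : Type*} [LinearOrder V] {G : SimpleGraph V} {x y : V}
    (hxy : G.Adj x y) : G.Adj (max x y) (min x y) := by
  rcases le_total x y with h | h
  · rw [max_eq_right h, min_eq_left h]; exact hxy.symm
  · rw [max_eq_left h, min_eq_right h]; exact hxy

lemma subdiv_up {V : Type*} [Fintype V] [LinearOrder V] [DecidableEq V]
    (G : SimpleGraph V) [DecidableRel G.Adj] [Fintype G.edgeSet]
    (W : Finset V) (h : IsVertexCover G W) :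
    ∃ W' : Finset (V ⊕ V × V), IsSubdivVertexCover G W' ∧
      W'.card = W.card + G.edgeFinset.card := by
  classical
  set f : Sym2 V → V ⊕ V × V := Sym2.lift ⟨fun u v =>
      if min u v ∈ W then Sum.inr (max u v, min u v) else Sum.inr (min u v, max u v),
      fun a b => by simp only [sup_comm a b, inf_comm a b]⟩ with hfdef
  have hfmk : ∀ u v : V, f s(u, v) =
      if min u v ∈ W then Sum.inr ((max u v : V), min u v)
      else Sum.inr ((min u v : V), max u v) := fun u v => Sym2.lift_mk ..
  have hback : ∀ x y : V, edgeOfAux (f s(x, y)) = s(x, y) := by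
    intro x y
    rw [hfmk]
    by_cases hm : min x y ∈ W
    · rw [if_pos hm, edgeOfAux_inr]; exact sym2_maxmin x y
    · rw [if_neg hm, edgeOfAux_inr, Sym2.eq_swap]; exact sym2_maxmin x y
  have hback' : ∀ e : Sym2 V, edgeOfAux (f e) = e := Sym2.ind hback
  have hisr : ∀ e : Sym2 V, ∃ p : V × V, f e = Sum.inr p := by
    refine Sym2.ind (fun x y => ?_)
    rw [hfmk]
    split
    · exact ⟨_, rfl⟩
    · exact ⟨_, rfl⟩
  set W' : Finset (V ⊕ V × V) := W.image Sum.inl ∪ G.edgeFinset.image f with hW'def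
  have hWin : ∀ x ∈ W, Sum.inl x ∈ W' := fun x hx =>
    mem_union_left _ (mem_image_of_mem _ hx)
  have hfin : ∀ u v : V, G.Adj u v → f s(u, v) ∈ W' := by
    intro u v huv
    exact mem_union_right _ (mem_image_of_mem f
      (by rw [SimpleGraph.mem_edgeFinset, SimpleGraph.mem_edgeSet]; exact huv))
  refine ⟨W', ⟨?_, ?_⟩, ?_⟩
  · rintro ⟨a, b⟩ hp
    rw [hW'def, mem_union] at hp
    rcases hp with hp | hp
    · obtain ⟨x, -, hx⟩ := mem_image.mp hp
      exact absurd hx (by simp)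
    · obtain ⟨e, he, hfe⟩ := mem_image.mp hp
      have hadj : G.Adj (max (edgeOfAux (Sum.inr ((a : V), b))).inf
          (edgeOfAux (Sum.inr ((a : V), b))).sup) a ∨ True := Or.inr trivial
      clear hadj
      revert he hfe
      refine Sym2.ind (fun x y he hfe => ?_) e
      have hxy : G.Adj x y := by
        rw [SimpleGraph.mem_edgeFinset, SimpleGraph.mem_edgeSet] at he; exact he
      rw [hfmk] at hfe
      by_cases hm : min x y ∈ W
      · rw [if_pos hm] at hfe
        obtain ⟨rfl, rfl⟩ : max x y = a ∧ min x y = b := by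
          simpa using hfe
        exact adj_maxmin hxy
      · rw [if_neg hm] at hfe
        obtain ⟨rfl, rfl⟩ : min x y = a ∧ max x y = b := by
          simpa using hfe
        exact (adj_maxmin hxy).symm
  · intro u v huv
    have hin := hfin u v huv
    rcases le_total u v with hle | hle
    · rw [hfmk, min_eq_left hle, max_eq_right hle] at hin
      by_cases hu : u ∈ W
      · rw [if_pos hu] at hin
        exact ⟨Or.inl (hWin u hu), Or.inr hin, Or.inl hin⟩
      · rw [if_neg hu] at hin
        have hv : v ∈ W := (h u v huv).resolve_left hu
        exact ⟨Or.inr hin, Or.inl hin, Or.inr (hWin v hv)⟩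
    · rw [hfmk, min_eq_right hle, max_eq_left hle] at hin
      by_cases hv : v ∈ W
      · rw [if_pos hv] at hin
        exact ⟨Or.inr hin, Or.inl hin, Or.inr (hWin v hv)⟩
      · rw [if_neg hv] at hin
        have hu : u ∈ W := (h u v huv).resolve_right hv
        exact ⟨Or.inl (hWin u hu), Or.inr hin, Or.inl hin⟩
  · rw [hW'def, card_union_of_disjoint, card_image_of_injective _ Sum.inl_injective,
      card_image_of_injOn]
    · intro e he e' he' hee
      rw [← hback' e, ← hback' e', hee]
    · rw [disjoint_left]
      intro a ha hb
      obtain ⟨x, -, rfl⟩ := mem_image.mp ha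
      obtain ⟨e, -, hfe⟩ := mem_image.mp hb
      obtain ⟨p, hp⟩ := hisr e
      rw [hp] at hfe
      exact absurd hfe (by simp)

lemma subdiv_down {V : Type*} [Fintype V] [LinearOrder V] [DecidableEq V]
    (G : SimpleGraph V) [DecidableRel G.Adj] [Fintype G.edgeSet]
    (W' : Finset (V ⊕ V × V)) (h : IsSubdivVertexCover G W') :
    ∃ W : Finset V, IsVertexCover G W ∧ W.card + G.edgeFinset.card ≤ W'.card := by
  classical
  obtain ⟨h1, h2⟩ := h
  set A : Finset V := Finset.univ.filter (fun u => Sum.inl u ∈ W') with hA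
  set B : Finset V := Finset.univ.filter (fun u => Sum.inl u ∉ W' ∧
    ∃ v, Sum.inr (u, v) ∈ W' ∧ Sum.inr (v, u) ∈ W' ∧ u < v) with hB
  set wit : V → V := fun u =>
    if hu : ∃ v, Sum.inr ((u : V), v) ∈ W' ∧ Sum.inr ((v : V), u) ∈ W' ∧ u < v
    then hu.choose else u with hwit
  have hwitP : ∀ u ∈ B, Sum.inr ((u : V), wit u) ∈ W' ∧
      Sum.inr ((wit u : V), u) ∈ W' ∧ u < wit u := by
    intro u hu
    rw [hB, mem_filter] at hu
    obtain ⟨-, -, hex⟩ := hu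
    rw [hwit]
    dsimp only
    rw [dif_pos hex]
    exact hex.choose_spec
  set t : Sym2 V → V ⊕ V × V := Sym2.lift ⟨fun u v =>
      if Sum.inr ((max u v : V), min u v) ∈ W' then Sum.inr ((max u v : V), min u v)
      else Sum.inr ((min u v : V), max u v),
      fun a b => by simp only [sup_comm a b, inf_comm a b]⟩ with htdef
  have htmk : ∀ u v : V, t s(u, v) =
      if Sum.inr ((max u v : V), min u v) ∈ W' then Sum.inr ((max u v : V), min u v)
      else Sum.inr ((min u v : V), max u v) := fun u v => Sym2.lift_mk ..
  have hback : ∀ x y : V, edgeOfAux (t s(x, y)) = s(x, y) := by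
    intro x y
    rw [htmk]
    split
    · rw [edgeOfAux_inr]; exact sym2_maxmin x y
    · rw [edgeOfAux_inr, Sym2.eq_swap]; exact sym2_maxmin x y
  have hback' : ∀ e : Sym2 V, edgeOfAux (t e) = e := Sym2.ind hback
  have hisr : ∀ e : Sym2 V, ∃ p : V × V, t e = Sum.inr p := by
    refine Sym2.ind (fun x y => ?_)
    rw [htmk]
    split
    · exact ⟨_, rfl⟩
    · exact ⟨_, rfl⟩
  have ht1 : ∀ u v, G.Adj u v → t s(u, v) ∈ W' := by
    intro u v huv
    rw [htmk]
    split
    · assumption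
    · next hneg =>
      have hmid := (h2 u v huv).2.1
      rcases le_total u v with hle | hle
      · rw [max_eq_right hle, min_eq_left hle] at hneg ⊢
        exact hmid.resolve_right hneg
      · rw [max_eq_left hle, min_eq_right hle] at hneg ⊢
        exact hmid.resolve_left hneg
  have htmem : ∀ e, e ∈ G.edgeFinset → t e ∈ W' := by
    refine Sym2.ind (fun x y he => ?_)
    refine ht1 x y ?_
    rw [SimpleGraph.mem_edgeFinset, SimpleGraph.mem_edgeSet] at he
    exact he
  have ht3 : ∀ (e : Sym2 V) (u v : V), u < v → Sum.inr ((v : V), u) ∈ W' →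
      t e ≠ Sum.inr ((u : V), v) := by
    intro e u v huv hvu
    revert hvu
    refine Sym2.ind (fun x y hvu hne => ?_) e
    rw [htmk] at hne
    split at hne
    · next hpos =>
      obtain ⟨h1', h2'⟩ : max x y = u ∧ min x y = v := by simpa using hne
      rw [← h1', ← h2'] at huv
      exact absurd (min_le_max : min x y ≤ max x y) (not_le.mpr huv)
    · next hpos =>
      obtain ⟨h1', h2'⟩ : min x y = u ∧ max x y = v := by simpa using hne
      rw [← h1', ← h2'] at hvu
      exact hpos hvu
  -- the vertex cover of G
  refine ⟨A ∪ B, ?_, ?_⟩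
  · intro u v huv
    by_cases hu : Sum.inl u ∈ W'
    · exact Or.inl (mem_union_left _ (by rw [hA, mem_filter]; exact ⟨mem_univ u, hu⟩))
    by_cases hv : Sum.inl v ∈ W'
    · exact Or.inr (mem_union_left _ (by rw [hA, mem_filter]; exact ⟨mem_univ v, hv⟩))
    have hboth : Sum.inr ((u : V), v) ∈ W' ∧ Sum.inr ((v : V), u) ∈ W' := by
      obtain ⟨hc1, hc2, hc3⟩ := h2 u v huv
      rcases hc2 with hc | hc
      · exact ⟨hc, hc3.resolve_right hv⟩
      · exact ⟨hc1.resolve_left hu, hc⟩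
    rcases lt_or_gt_of_ne huv.ne with hlt | hlt
    · refine Or.inl (mem_union_right _ ?_)
      rw [hB, mem_filter]
      exact ⟨mem_univ u, hu, v, hboth.1, hboth.2, hlt⟩
    · refine Or.inr (mem_union_right _ ?_)
      rw [hB, mem_filter]
      exact ⟨mem_univ v, hv, u, hboth.2, hboth.1, hlt⟩
  · -- the cardinality bound
    set b : V → V ⊕ V × V := fun u => Sum.inr (u, wit u) with hb
    set S : Finset (V ⊕ V × V) := (A.image Sum.inl ∪ B.image b) ∪ G.edgeFinset.image t
      with hS
    have hSsub : S ⊆ W' := by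
      intro x hx
      rw [hS, mem_union, mem_union] at hx
      rcases hx with (hx | hx) | hx
      · obtain ⟨a, ha, rfl⟩ := mem_image.mp hx
        rw [hA, mem_filter] at ha
        exact ha.2
      · obtain ⟨u, hu, rfl⟩ := mem_image.mp hx
        exact (hwitP u hu).1
      · obtain ⟨e, he, rfl⟩ := mem_image.mp hx
        exact htmem e he
    have hScard : S.card = (A.card + B.card) + G.edgeFinset.card := by
      rw [hS, card_union_of_disjoint, card_union_of_disjoint,
        card_image_of_injective _ Sum.inl_injective, card_image_of_injOn,
        card_image_of_injOn]
      · intro e he e' he' hee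
        rw [← hback' e, ← hback' e', hee]
      · intro u hu u' hu' huu
        have : u = u' ∧ wit u = wit u' := by
          rw [hb] at huu; simpa using huu
        exact this.1
      · rw [disjoint_left]
        intro x hx hx'
        obtain ⟨a, -, rfl⟩ := mem_image.mp hx
        obtain ⟨u, -, hux⟩ := mem_image.mp hx'
        rw [hb] at hux
        exact absurd hux (by simp)
      · rw [disjoint_left]
        intro x hx hx'
        obtain ⟨e, -, hex⟩ := mem_image.mp hx'
        rw [mem_union] at hx
        rcases hx with hx | hx
        · obtain ⟨a, -, rfl⟩ := mem_image.mp hx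
          obtain ⟨p, hp⟩ := hisr e
          rw [hp] at hex
          exact absurd hex (by simp)
        · obtain ⟨u, hu, rfl⟩ := mem_image.mp hx
          obtain ⟨hP1, hP2, hP3⟩ := hwitP u hu
          rw [hb] at hex
          exact ht3 e u (wit u) hP3 hP2 hex
    calc (A ∪ B).card + G.edgeFinset.card
        ≤ (A.card + B.card) + G.edgeFinset.card := by
          exact Nat.add_le_add_right (card_union_le _ _) _
      _ = S.card := hScard.symm
      _ ≤ W'.card := card_le_card hSsub

/-- The minimum vertex cover size of the 3-subdivision of `G` equals the minimum vertex
cover size of `G` plus the number of edges of `G`. -/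
theorem subdiv_min_vertex_cover {V : Type*} [Fintype V] (G : SimpleGraph V) :
    sInf {c : ℕ | ∃ W : Finset (V ⊕ V × V), IsSubdivVertexCover G W ∧ W.card = c} =
      sInf {c : ℕ | ∃ W : Finset V, IsVertexCover G W ∧ W.card = c} + G.edgeSet.ncard := by
  classical
  letI : LinearOrder V := LinearOrder.lift' (fun v => ((Fintype.equivFin V) v : ℕ))
    (fun a b hab => (Fintype.equivFin V).injective (Fin.val_injective hab))
  have hE : G.edgeSet.ncard = G.edgeFinset.card := Set.ncard_eq_toFinset_card' _
  have hne2 : {c : ℕ | ∃ W : Finset V, IsVertexCover G W ∧ W.card = c}.Nonempty :=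
    ⟨_, Finset.univ, fun x y _ => Or.inl (Finset.mem_univ x), rfl⟩
  obtain ⟨W, hW, hWc⟩ := Nat.sInf_mem hne2
  obtain ⟨W', hW', hW'c⟩ := subdiv_up G W hW
  have hne1 : {c : ℕ | ∃ W : Finset (V ⊕ V × V),
      IsSubdivVertexCover G W ∧ W.card = c}.Nonempty := ⟨_, W', hW', rfl⟩
  apply le_antisymm
  · calc sInf {c : ℕ | ∃ W : Finset (V ⊕ V × V), IsSubdivVertexCover G W ∧ W.card = c}
        ≤ W'.card := Nat.sInf_le ⟨W', hW', rfl⟩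
      _ = _ := by rw [hW'c, hWc, hE]
  · obtain ⟨W'', hW'', hW''c⟩ := Nat.sInf_mem hne1
    obtain ⟨W2, hW2, hle⟩ := subdiv_down G W'' hW''
    rw [← hW''c, hE]
    have hm : W2.card ∈ {c : ℕ | ∃ W : Finset V, IsVertexCover G W ∧ W.card = c} :=
      Set.mem_setOf_eq ▸ ⟨W2, hW2, rfl⟩
    exact le_trans (Nat.add_le_add_right (Nat.sInf_le hm) _) hle
end

section
/- Let G' be the 3-subdivision of a graph G = (V,E). For every vertex cover W' of G', there exists a vertex cover W'' of G' with |W''| ≤ |W'| such that for every edge (u,v) of G, exactly one of the two subdivision vertices u', v' on the corresponding path u - u' - v' - v belongs to W''. -/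
/-!
Order the vertices of `G` linearly. Whenever a cover contains both subdivision vertices
`u'` and `v'` of an edge `{u, v}` with `v < u`, replace `u'` by the original vertex `u`:
the edge `u'v'` stays covered by `v'`, the edge `uu'` by `u`, and the image of a finset
is never larger than the finset. Afterwards at most one of `u'`, `v'` survives, and since
the middle edge was covered, exactly one does.
-/

section MoveToEndpoint

variable {V : Type*} [LinearOrder V] (W : Finset (V ⊕ V × V))

def moveToEndpoint : V ⊕ V × V → V ⊕ V × V
  | .inl u => .inl u
  | .inr (u, v) => if .inr (v, u) ∈ W ∧ v < u then .inl u else .inr (u, v)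

theorem inr_mem_image_moveToEndpoint_iff (u v : V) :
    .inr (u, v) ∈ W.image (moveToEndpoint W) ↔ .inr (u, v) ∈ W ∧ ¬(.inr (v, u) ∈ W ∧ v < u) := by
  constructor
  · intro hp
    obtain ⟨x, hx, hfx⟩ := Finset.mem_image.1 hp
    rcases x with a | ⟨a, b⟩
    · simp [moveToEndpoint] at hfx
    · by_cases hc : .inr (b, a) ∈ W ∧ b < a
      · simp [moveToEndpoint, hc] at hfx
      · simp only [moveToEndpoint, hc, if_false, Sum.inr.injEq, Prod.mk.injEq] at hfx
        obtain ⟨rfl, rfl⟩ := hfx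
        exact ⟨hx, hc⟩
  · rintro ⟨hp, hc⟩
    exact Finset.mem_image.2 ⟨.inr (u, v), hp, by simp [moveToEndpoint, hc]⟩

theorem inl_mem_image_moveToEndpoint {u : V} (hu : .inl u ∈ W) :
    .inl u ∈ W.image (moveToEndpoint W) :=
  Finset.mem_image.2 ⟨.inl u, hu, rfl⟩

theorem inl_or_inr_mem_image_moveToEndpoint {u v : V} (huv : .inr (u, v) ∈ W) :
    .inl u ∈ W.image (moveToEndpoint W) ∨ .inr (u, v) ∈ W.image (moveToEndpoint W) := by
  by_cases hc : .inr (v, u) ∈ W ∧ v < u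
  · exact .inl (Finset.mem_image.2 ⟨.inr (u, v), huv, by simp [moveToEndpoint, hc]⟩)
  · exact .inr ((inr_mem_image_moveToEndpoint_iff W u v).2 ⟨huv, hc⟩)

theorem inr_mem_image_moveToEndpoint_iff_not {u v : V} (hne : u ≠ v)
    (hW : .inr (u, v) ∈ W ∨ .inr (v, u) ∈ W) :
    .inr (u, v) ∈ W.image (moveToEndpoint W) ↔ .inr (v, u) ∉ W.image (moveToEndpoint W) := by
  simp only [inr_mem_image_moveToEndpoint_iff]
  rcases hne.lt_or_gt with h | h <;>
    by_cases huv : .inr (u, v) ∈ W <;> by_cases hvu : .inr (v, u) ∈ W <;>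
    simp_all [h.not_gt]

theorem isSubdivVertexCover_image_moveToEndpoint {G : SimpleGraph V}
    (hW : IsSubdivVertexCover G W) : IsSubdivVertexCover G (W.image (moveToEndpoint W)) := by
  obtain ⟨hsub, hcov⟩ := hW
  refine ⟨fun ⟨u, v⟩ hp => hsub (u, v) ((inr_mem_image_moveToEndpoint_iff W u v).1 hp).1,
    fun u v huv => ?_⟩
  obtain ⟨hu, hmid, hv⟩ := hcov u v huv
  refine ⟨?_, ?_, ?_⟩
  · rcases hu with hu | hu
    · exact .inl (inl_mem_image_moveToEndpoint W hu)
    · exact inl_or_inr_mem_image_moveToEndpoint W hu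
  · have := inr_mem_image_moveToEndpoint_iff_not W huv.ne hmid
    tauto
  · rcases hv with hv | hv
    · exact (inl_or_inr_mem_image_moveToEndpoint W hv).symm
    · exact .inr (inl_mem_image_moveToEndpoint W hv)

end MoveToEndpoint

/-- Every vertex cover `W'` of the 3-subdivision of `G` can be improved to a vertex
cover `W''` of no larger size such that, for each edge `{u,v}` of `G`, exactly one of
the two subdivision vertices `u' = Sum.inr (u,v)` and `v' = Sum.inr (v,u)` is in `W''`. -/
theorem subdiv_cover_exactly_one {V : Type*} (G : SimpleGraph V)
    (W' : Finset (V ⊕ V × V)) (hW' : IsSubdivVertexCover G W') :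
    ∃ W'' : Finset (V ⊕ V × V), IsSubdivVertexCover G W'' ∧ W''.card ≤ W'.card ∧
      ∀ u v, G.Adj u v → (Sum.inr (u, v) ∈ W'' ↔ Sum.inr (v, u) ∉ W'') := by
  let : LinearOrder V := IsWellOrder.linearOrder WellOrderingRel
  exact ⟨W'.image (moveToEndpoint W'), isSubdivVertexCover_image_moveToEndpoint W' hW',
    Finset.card_image_le, fun u v huv =>
      inr_mem_image_moveToEndpoint_iff_not W' huv.ne (hW'.2 u v huv).2.1⟩
end

section
/- Let W' be a vertex cover of the 3-subdivision G' of a graph G = (V,E) such that for each edge (u,v) of G exactly one of the subdivision vertices u', v' lies in W'. Then W' ∩ V is a vertex cover of G of size |W'| − |E|. -/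
/-- If `W'` is a vertex cover of the 3-subdivision of `G` containing, for each edge
`{u,v}` of `G`, exactly one of the two subdivision vertices, then `W' ∩ V` is a vertex
cover of `G` of size `|W'| − |E|`. -/
theorem subdiv_cover_restrict {V : Type*} [Fintype V] [DecidableEq V] (G : SimpleGraph V)
    (W' : Finset (V ⊕ V × V)) (hW' : IsSubdivVertexCover G W')
    (hone : ∀ u v, G.Adj u v → (Sum.inr (u, v) ∈ W' ↔ Sum.inr (v, u) ∉ W')) :
    IsVertexCover G (Finset.univ.filter (fun x => Sum.inl x ∈ W')) ∧
      (Finset.univ.filter (fun x => Sum.inl x ∈ W')).card + G.edgeSet.ncard = W'.card := by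
  classical
  constructor
  · intro x y hxy
    simp only [Finset.mem_filter, Finset.mem_univ, true_and]
    obtain ⟨h1, h2, h3⟩ := hW'.2 x y hxy
    by_contra h
    push_neg at h
    have hxy1 : Sum.inr (x, y) ∈ W' := h1.resolve_left h.1
    have hxy2 : Sum.inr (y, x) ∈ W' := h3.resolve_right h.2
    exact (hone x y hxy).mp hxy1 hxy2
  · have hsplit := Finset.card_filter_add_card_filter_not
      (s := W') (p := fun a => a.isLeft = true)
    have hleft : (Finset.univ.filter (fun x => Sum.inl x ∈ W')).card
        = (W'.filter (fun a => a.isLeft = true)).card := by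
      refine Finset.card_bij (fun x _ => Sum.inl x) ?_ ?_ ?_
      · intro a ha
        simp only [Finset.mem_filter, Finset.mem_univ, true_and] at ha
        simp [ha]
      · intro a ha b hb h
        exact Sum.inl.inj h
      · intro b hb
        simp only [Finset.mem_filter] at hb
        cases b with
        | inl x => exact ⟨x, by simp [hb.1], rfl⟩
        | inr p => simp at hb
    have hright : (W'.filter (fun a => ¬ a.isLeft = true)).card = G.edgeFinset.card := by
      refine Finset.card_bij
        (fun a _ => Sum.elim (fun x => s(x, x)) (fun p => s(p.1, p.2)) a) ?_ ?_ ?_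
      · intro a ha
        simp only [Finset.mem_filter] at ha
        cases a with
        | inl x => simp at ha
        | inr p =>
          simpa [SimpleGraph.mem_edgeFinset] using hW'.1 p ha.1
      · intro a ha b hb h
        simp only [Finset.mem_filter] at ha hb
        cases a with
        | inl x => simp at ha
        | inr p =>
          cases b with
          | inl y => simp at hb
          | inr q =>
            simp only [Sum.elim_inr, Sym2.eq, Sym2.rel_iff', Prod.mk.injEq] at h
            rcases h with ⟨h1, h2⟩ | h
            · exact congrArg Sum.inr (Prod.ext h1 h2)
            · exfalso
              simp only [Prod.swap_prod_mk, Prod.mk.injEq] at h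
              have hq : q = (p.2, p.1) := Prod.ext h.2.symm h.1.symm
              have hadj := hW'.1 p ha.1
              have := (hone p.1 p.2 hadj).mp ha.1
              rw [hq] at hb
              exact this hb.1
      · intro e he
        rw [SimpleGraph.mem_edgeFinset] at he
        induction e with
        | _ u v =>
          have hadj : G.Adj u v := he
          obtain ⟨_, h2, _⟩ := hW'.2 u v hadj
          rcases h2 with h | h
          · exact ⟨Sum.inr (u, v), by simp [h], rfl⟩
          · exact ⟨Sum.inr (v, u), by simp [h], Sym2.eq_swap⟩
    have hncard : G.edgeSet.ncard = G.edgeFinset.card :=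
      Set.ncard_eq_toFinset_card' _
    omega
end

section
/- For any vertex cover W of a graph G = (V,E), the set obtained by adding to W, for each edge (u,v) ∈ E, one suitably chosen subdivision vertex of the path u - u' - v' - v, is a vertex cover of the 3-subdivision G' of size |W| + |E|. Specifically: if u ∈ W choose v', otherwise choose u'. -/
/-! Choosing the subdivision vertex `Sum.inr (x, y)` of an edge amounts to orienting the edge
as `(x, y)`. The chosen vertex meets two of the three edges of the path `x - x' - y' - y`, so
orienting every edge towards an endpoint in `W` (possible since `W` is a cover) leaves only
`(y', y)`, which is met by `y ∈ W`. -/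

namespace Sym2

variable {α : Type*}

noncomputable def orientToward (S : Set α) (e : Sym2 α) : α × α :=
  open Classical in if (Quot.out e).1 ∈ S then (Quot.out e).swap else Quot.out e

theorem mk_out (e : Sym2 α) : s((Quot.out e).1, (Quot.out e).2) = e :=
  Quot.out_eq e

theorem mk_orientToward (S : Set α) (e : Sym2 α) :
    s((orientToward S e).1, (orientToward S e).2) = e := by
  unfold orientToward
  split_ifs
  · rw [Prod.fst_swap, Prod.snd_swap, eq_swap, mk_out]
  · exact mk_out e

theorem orientToward_injective (S : Set α) : Function.Injective (orientToward S) :=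
  Function.LeftInverse.injective (g := fun p : α × α => s(p.1, p.2)) (mk_orientToward S)

theorem orientToward_snd_mem {S : Set α} {e : Sym2 α} {x : α} (hx : x ∈ e) (hxS : x ∈ S) :
    (orientToward S e).2 ∈ S := by
  unfold orientToward
  split_ifs with h
  · exact h
  · rw [← mk_out e, mem_iff] at hx
    rcases hx with rfl | rfl
    exacts [absurd hxS h, hxS]

theorem orientToward_eq_or_eq_swap (S : Set α) (u v : α) :
    orientToward S s(u, v) = (u, v) ∨ orientToward S s(u, v) = (v, u) :=
  mk_eq_mk_iff.1 (mk_orientToward S s(u, v))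

end Sym2

theorem IsVertexCover.exists_mem_of_mem_edgeSet {V : Type*} {G : SimpleGraph V} {W : Finset V}
    (hW : IsVertexCover G W) {e : Sym2 V} (he : e ∈ G.edgeSet) : ∃ x ∈ e, x ∈ W := by
  induction e using Sym2.ind with
  | h u v =>
    rcases hW u v he with hu | hv
    exacts [⟨u, Sym2.mem_mk_left u v, hu⟩, ⟨v, Sym2.mem_mk_right u v, hv⟩]

section Orientation

variable {V : Type*} {G : SimpleGraph V} {W : Finset V} [DecidableEq V] [Fintype G.edgeSet]

theorem IsVertexCover.adj_and_snd_mem_of_mem_image (hW : IsVertexCover G W) {p : V × V}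
    (hp : p ∈ G.edgeFinset.image (Sym2.orientToward (W : Set V))) :
    G.Adj p.1 p.2 ∧ p.2 ∈ W := by
  obtain ⟨e, he, rfl⟩ := Finset.mem_image.1 hp
  rw [SimpleGraph.mem_edgeFinset] at he
  obtain ⟨x, hxe, hxW⟩ := hW.exists_mem_of_mem_edgeSet he
  refine ⟨?_, Sym2.orientToward_snd_mem hxe hxW⟩
  rwa [← SimpleGraph.mem_edgeSet, Sym2.mk_orientToward]

theorem mem_image_orientToward_or_swap (S : Set V) {u v : V} (huv : G.Adj u v) :
    (u, v) ∈ G.edgeFinset.image (Sym2.orientToward S) ∨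
      (v, u) ∈ G.edgeFinset.image (Sym2.orientToward S) := by
  have hmem : Sym2.orientToward S s(u, v) ∈ G.edgeFinset.image (Sym2.orientToward S) :=
    Finset.mem_image_of_mem _ (G.mem_edgeFinset.2 huv)
  rcases Sym2.orientToward_eq_or_eq_swap S u v with h | h <;> rw [h] at hmem
  exacts [.inl hmem, .inr hmem]

end Orientation

theorem isSubdivVertexCover_disjSum {V : Type*} {G : SimpleGraph V} {W : Finset V}
    {T : Finset (V × V)} (hT : ∀ p ∈ T, G.Adj p.1 p.2 ∧ p.2 ∈ W)
    (hT' : ∀ u v, G.Adj u v → (u, v) ∈ T ∨ (v, u) ∈ T) :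
    IsSubdivVertexCover G (W.disjSum T) := by
  simp only [IsSubdivVertexCover, Finset.inl_mem_disjSum, Finset.inr_mem_disjSum]
  refine ⟨fun p hp => (hT p hp).1, fun u v huv => ⟨?_, hT' u v huv, ?_⟩⟩
  · by_cases hu : u ∈ W
    · exact .inl hu
    · exact .inr <| (hT' u v huv).resolve_right fun hvu => hu (hT _ hvu).2
  · by_cases hv : v ∈ W
    · exact .inr hv
    · exact .inl <| (hT' u v huv).resolve_left fun huv' => hv (hT _ huv').2

/-- Any vertex cover `W` of `G` extends to a vertex cover `W'` of the 3-subdivision of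
size `|W| + |E|`, obtained by adding for each edge `{u,v}` one subdivision vertex: `v'`
if `u ∈ W`, else `u'`.  In particular every added subdivision vertex `Sum.inr (x,y)`
(the vertex adjacent to `x` on edge `{x,y}`) has its far endpoint `y` in `W`. -/
theorem subdiv_cover_extend {V : Type*} [Fintype V] (G : SimpleGraph V)
    (W : Finset V) (hW : IsVertexCover G W) :
    ∃ W' : Finset (V ⊕ V × V), IsSubdivVertexCover G W' ∧
      W'.card = W.card + G.edgeSet.ncard ∧
      (∀ u : V, Sum.inl u ∈ W' ↔ u ∈ W) ∧
      (∀ x y : V, Sum.inr (x, y) ∈ W' → G.Adj x y ∧ y ∈ W) := by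
  classical
  set T := G.edgeFinset.image (Sym2.orientToward (W : Set V))
  have hT : ∀ p ∈ T, G.Adj p.1 p.2 ∧ p.2 ∈ W := fun _ => hW.adj_and_snd_mem_of_mem_image
  refine ⟨W.disjSum T, isSubdivVertexCover_disjSum hT fun u v => mem_image_orientToward_or_swap _,
    ?_, fun u => Finset.inl_mem_disjSum, fun x y hxy => hT (x, y) (Finset.inr_mem_disjSum.1 hxy)⟩
  rw [Finset.card_disjSum, Finset.card_image_of_injective _ (Sym2.orientToward_injective _),
    Set.ncard_eq_toFinset_card', SimpleGraph.edgeFinset]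
end

section
/- Let T be a rooted tree whose leaves carry sites, and let the sites be partitioned into sets S_1, …, S_k of consecutive sites according to an in-order (depth-first) traversal. Color, for each i, the minimal subtree of T containing all sites of S_i with color i. Then no edge of T receives more than two colors. -/
/-- At most two colors per edge.  The leaves of the tree are linearly ordered by the
in-order traversal; the sets `S 1, …, S k` are nonempty consecutive intervals in this
order, and `D` is the (order-convex) set of leaves below a fixed edge `e`.  The edge `e`
receives color `i` precisely when the minimal subtree of `S i` contains `e`, i.e. when
`S i` has a leaf in `D` and a leaf outside `D`.  Then `e` receives at most two colors. -/
theorem edge_at_most_two_colors {α : Type*} [LinearOrder α] (k : ℕ)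
    (S : Fin k → Set α) (hne : ∀ i, (S i).Nonempty)
    (hord : ∀ i j : Fin k, i < j → ∀ x ∈ S i, ∀ y ∈ S j, x < y)
    (D : Set α) (hD : ∀ x y z, x ∈ D → z ∈ D → x ≤ y → y ≤ z → y ∈ D) :
    {i : Fin k | (S i ∩ D).Nonempty ∧ (S i \ D).Nonempty}.ncard ≤ 2 := by
  set T := {i : Fin k | (S i ∩ D).Nonempty ∧ (S i \ D).Nonempty} with hT
  by_contra h
  push_neg at h
  obtain ⟨a, ha, b, hb, c, hc, hab, hac, hbc⟩ :=
    (Set.two_lt_ncard (Set.toFinite T)).mp h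
  have key : ∀ i ∈ T, ∀ j ∈ T, ∀ l ∈ T, i < j → j < l → False := by
    intro i hi j hj l hl hij hjl
    obtain ⟨x, hxS, hxD⟩ := hi.1
    obtain ⟨z, hzS, hzD⟩ := hl.1
    obtain ⟨y, hyS, hyD⟩ := hj.2
    exact hyD (hD x y z hxD hzD (hord i j hij x hxS y hyS).le
      (hord j l hjl y hyS z hzS).le)
  rcases hab.lt_or_gt with h1 | h1 <;>
    rcases hac.lt_or_gt with h2 | h2 <;>
      rcases hbc.lt_or_gt with h3 | h3 <;>
        first
          | exact key _ ha _ hb _ hc h1 h3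
          | exact key _ ha _ hc _ hb h2 h3
          | exact key _ hc _ ha _ hb h2 h1
          | exact key _ hb _ ha _ hc h1 h2
          | exact key _ hb _ hc _ ha h3 h2
          | exact key _ hc _ hb _ ha h3 h1
          | exact absurd (h1.trans h3) h2.asymm
          | exact absurd (h2.trans h3) h1.asymm
end
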